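/- The Fibonacci polynomial P_n(x) equals (-1)^{⌈(n-1)/2⌉} times the determinant of the (n+1)×(n+1) matrix whose i-th row (0 ≤ i ≤ n−1) is (ν_i, ν_{i+1}, …, ν_{i+n}) and whose last row is (1, x, x², …, xⁿ), where ν_{2m} = (-1)^m·C(2m,m)/(m+1) and ν_{odd} = 0. -/
import Mathlib


/-- Signed Catalan moments: `ν_{2m} = (-1)^m C(2m,m)/(m+1)`, `ν_{odd} = 0`. -/
noncomputable def sgnMoment (n : ℕ) : ℚ :=
  if Even n then (-1) ^ (n / 2) * (Nat.choose n (n / 2) : ℚ) / (n / 2 + 1) else 0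

/-- Fibonacci polynomials. -/
noncomputable def fibPoly : ℕ → Polynomial ℚ
  | 0 => 1
  | 1 => Polynomial.X
  | n + 2 => Polynomial.X * fibPoly (n + 1) + fibPoly n

open Polynomial Finset

/-- Signed ballot numbers via the walk recursion. -/
noncomputable def balB : ℕ → ℕ → ℚ
  | 0, 0 => 1
  | 0, _ + 1 => 0
  | i + 1, 0 => balB i 1
  | i + 1, j + 1 => balB i (j + 2) - balB i j

/-- Closed form for `balB`. -/
lemma balB_eq : ∀ i j, balB i j =
    if i < j ∨ (i + j) % 2 = 1 then 0
    else (-1 : ℚ) ^ ((i + j) / 2) *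
      ((Nat.choose i ((i - j) / 2) : ℚ) - Nat.choose i (i - (i - j) / 2 + 1))
  | 0, 0 => by
    rw [balB, if_neg (by omega)]
    norm_num
  | 0, j + 1 => by
    rw [balB, if_pos (by omega)]
  | i + 1, 0 => by
    rw [show balB (i + 1) 0 = balB i 1 from by rw [balB], balB_eq i 1]
    rcases Nat.even_or_odd i with he | ho
    · obtain ⟨t, rfl⟩ := he
      rw [if_pos (show t + t < 1 ∨ (t + t + 1) % 2 = 1 by omega),
        if_pos (show t + t + 1 < 0 ∨ (t + t + 1 + 0) % 2 = 1 by omega)]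
    · obtain ⟨t, rfl⟩ := ho
      rw [if_neg (show ¬ (2 * t + 1 < 1 ∨ (2 * t + 1 + 1) % 2 = 1) by omega),
        if_neg (show ¬ (2 * t + 1 + 1 < 0 ∨ (2 * t + 1 + 1 + 0) % 2 = 1) by omega)]
      rw [show (2 * t + 1 + 1) / 2 = t + 1 from by omega,
        show (2 * t + 1 - 1) / 2 = t from by omega,
        show 2 * t + 1 - t + 1 = t + 2 from by omega,
        show (2 * t + 1 + 1 - 0) / 2 = t + 1 from by omega,
        show 2 * t + 1 + 1 - (t + 1) + 1 = t + 2 from by omega]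
      have p1 : (2 * t + 1 + 1).choose (t + 1)
          = (2 * t + 1).choose t + (2 * t + 1).choose (t + 1) := Nat.choose_succ_succ _ _
      have p2 : (2 * t + 1 + 1).choose (t + 2)
          = (2 * t + 1).choose (t + 1) + (2 * t + 1).choose (t + 2) := Nat.choose_succ_succ _ _
      rw [p1, p2]
      push_cast
      ring
  | i + 1, j + 1 => by
    rw [show balB (i + 1) (j + 1) = balB i (j + 2) - balB i j from by rw [balB],
      balB_eq i (j + 2), balB_eq i j]
    rcases Nat.lt_or_ge i j with hlt | hge
    · rw [if_pos (show i + 1 < j + 1 ∨ (i + 1 + (j + 1)) % 2 = 1 by omega),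
        if_pos (show i < j + 2 ∨ (i + (j + 2)) % 2 = 1 by omega),
        if_pos (show i < j ∨ (i + j) % 2 = 1 by omega)]
      ring
    rcases Nat.even_or_odd (i + j) with he | ho
    · obtain ⟨c, hc⟩ := he
      rcases Nat.eq_or_lt_of_le hge with heq | hgt
      · -- i = j
        obtain rfl : i = j := heq.symm
        rw [if_neg (show ¬ (i + 1 < i + 1 ∨ (i + 1 + (i + 1)) % 2 = 1) by omega),
          if_pos (show i < i + 2 ∨ (i + (i + 2)) % 2 = 1 by omega),
          if_neg (show ¬ (i < i ∨ (i + i) % 2 = 1) by omega)]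
        rw [show (i + 1 + (i + 1)) / 2 = i + 1 from by omega,
          show (i + 1 - (i + 1)) / 2 = 0 from by omega,
          show i + 1 - 0 + 1 = i + 2 from by omega,
          show (i + i) / 2 = i from by omega,
          show (i - i) / 2 = 0 from by omega,
          show i - 0 + 1 = i + 1 from by omega]
        rw [Nat.choose_eq_zero_of_lt (by omega : i + 1 < i + 2),
          Nat.choose_eq_zero_of_lt (by omega : i < i + 1)]
        norm_num
        ring
      · -- i ≥ j + 2
        obtain ⟨m, rfl⟩ : ∃ m, i = j + 2 * m + 2 := ⟨(i - j - 2) / 2, by omega⟩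
        rw [if_neg (show ¬ (j + 2 * m + 2 + 1 < j + 1 ∨ (j + 2 * m + 2 + 1 + (j + 1)) % 2 = 1)
              by omega),
          if_neg (show ¬ (j + 2 * m + 2 < j + 2 ∨ (j + 2 * m + 2 + (j + 2)) % 2 = 1) by omega),
          if_neg (show ¬ (j + 2 * m + 2 < j ∨ (j + 2 * m + 2 + j) % 2 = 1) by omega)]
        rw [show (j + 2 * m + 2 + 1 + (j + 1)) / 2 = j + m + 2 from by omega,
          show (j + 2 * m + 2 + 1 - (j + 1)) / 2 = m + 1 from by omega,
          show j + 2 * m + 2 + 1 - (m + 1) + 1 = j + m + 3 from by omega,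
          show (j + 2 * m + 2 + (j + 2)) / 2 = j + m + 2 from by omega,
          show (j + 2 * m + 2 - (j + 2)) / 2 = m from by omega,
          show j + 2 * m + 2 - m + 1 = j + m + 3 from by omega,
          show (j + 2 * m + 2 + j) / 2 = j + m + 1 from by omega,
          show (j + 2 * m + 2 - j) / 2 = m + 1 from by omega,
          show j + 2 * m + 2 - (m + 1) + 1 = j + m + 2 from by omega]
        have p1 : (j + 2 * m + 2 + 1).choose (m + 1)
            = (j + 2 * m + 2).choose m + (j + 2 * m + 2).choose (m + 1) :=
          Nat.choose_succ_succ _ _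
        have p2 : (j + 2 * m + 2 + 1).choose (j + m + 3)
            = (j + 2 * m + 2).choose (j + m + 2) + (j + 2 * m + 2).choose (j + m + 3) :=
          Nat.choose_succ_succ _ _
        rw [p1, p2]
        push_cast
        ring
    · obtain ⟨c, hc⟩ := ho
      rw [if_pos (show i + 1 < j + 1 ∨ (i + 1 + (j + 1)) % 2 = 1 by omega),
        if_pos (show i < j + 2 ∨ (i + (j + 2)) % 2 = 1 by omega),
        if_pos (show i < j ∨ (i + j) % 2 = 1 by omega)]
      ring

lemma balB_lt (i j : ℕ) (h : i < j) : balB i j = 0 := by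
  rw [balB_eq]; simp [h]

lemma balB_diag (j : ℕ) : balB j j = (-1 : ℚ) ^ j := by
  rw [balB_eq]
  have h1 : ¬ (j < j ∨ (j + j) % 2 = 1) := by omega
  rw [if_neg h1]
  have h2 : (j + j) / 2 = j := by omega
  have h3 : (j - j) / 2 = 0 := by omega
  rw [h2, h3]
  simp [Nat.choose_eq_zero_of_lt (by omega : j < j - 0 + 1)]

lemma sgnMoment_odd {i : ℕ} (h : i % 2 = 1) : sgnMoment i = 0 := by
  rw [sgnMoment, if_neg]
  simp [Nat.even_iff, h]

lemma sgnMoment_even (m : ℕ) :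
    sgnMoment (m + m) = (-1) ^ m * (Nat.choose (m + m) m : ℚ) / (m + 1) := by
  rw [sgnMoment, if_pos ⟨m, rfl⟩]
  have h4 : (m + m) / 2 = m := by omega
  rw [h4]
  have h5 : ((m + m : ℕ) : ℚ) / 2 + 1 = m + 1 := by push_cast; ring
  rw [h5]

lemma balB_zero (i : ℕ) : balB i 0 = sgnMoment i := by
  rw [balB_eq]
  rcases Nat.even_or_odd i with he | ho
  · obtain ⟨m, rfl⟩ := he
    rw [sgnMoment_even]
    have h1 : ¬ (m + m < 0 ∨ (m + m + 0) % 2 = 1) := by omega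
    rw [if_neg h1]
    have h2 : (m + m + 0) / 2 = m := by omega
    have h3 : (m + m - 0) / 2 = m := by omega
    have h5 : m + m - m + 1 = m + 1 := by omega
    rw [h2, h3, h5]
    have hm1 : (m : ℚ) + 1 ≠ 0 := by positivity
    have hc : (Nat.choose (m + m) (m + 1) : ℚ) * (m + 1) = (Nat.choose (m + m) m : ℚ) * m := by
      have := Nat.choose_succ_right_eq (m + m) m
      have h6 : m + m - m = m := by omega
      rw [h6] at this
      exact_mod_cast this
    have key : (Nat.choose (m + m) m : ℚ) - Nat.choose (m + m) (m + 1)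
        = (Nat.choose (m + m) m : ℚ) / (m + 1) := by
      rw [eq_div_iff hm1]
      nlinarith [hc]
    rw [key]
    ring
  · have h := Nat.odd_iff.mp ho
    rw [sgnMoment_odd h, if_pos (Or.inr (by omega))]

lemma balB_one (i : ℕ) : balB i 1 = sgnMoment (i + 1) := by
  rw [show balB i 1 = balB (i + 1) 0 from by rw [balB], balB_zero]

/-- The "moment pairing" `S i j = L[x^i · P_j]`. -/
noncomputable def pairS (i j : ℕ) : ℚ :=
  ∑ k ∈ Finset.range (j + 1), sgnMoment (i + k) * (fibPoly j).coeff k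

lemma fibPoly_monic : ∀ n, (fibPoly n).Monic ∧ (fibPoly n).natDegree = n
  | 0 => by simp [fibPoly, monic_one]
  | 1 => by simp [fibPoly, monic_X]
  | (n + 2) => by
    obtain ⟨h1m, h1d⟩ := fibPoly_monic (n + 1)
    obtain ⟨h0m, h0d⟩ := fibPoly_monic n
    have hXm : (X * fibPoly (n + 1)).Monic := monic_X.mul h1m
    have hXd : (X * fibPoly (n + 1)).natDegree = n + 2 := by
      rw [monic_X.natDegree_mul h1m, natDegree_X, h1d]; omega
    have hlt : (fibPoly n).degree < (X * fibPoly (n + 1)).degree := by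
      rw [degree_eq_natDegree h0m.ne_zero, degree_eq_natDegree hXm.ne_zero, hXd, h0d]
      exact_mod_cast Nat.lt_succ_of_lt (Nat.lt_succ_self n)
    constructor
    · show (fibPoly (n + 2)).Monic
      rw [fibPoly]
      exact hXm.add_of_left hlt
    · show (fibPoly (n + 2)).natDegree = n + 2
      rw [fibPoly, natDegree_add_eq_left_of_degree_lt hlt, hXd]

lemma fibPoly_natDegree (n : ℕ) : (fibPoly n).natDegree = n := (fibPoly_monic n).2

lemma fibPoly_coeff_zero {n k : ℕ} (h : n < k) : (fibPoly n).coeff k = 0 :=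
  Polynomial.coeff_eq_zero_of_natDegree_lt (by rw [fibPoly_natDegree]; exact h)

lemma pairS_extend (i j N : ℕ) (h : j + 1 ≤ N) :
    ∑ k ∈ Finset.range N, sgnMoment (i + k) * (fibPoly j).coeff k = pairS i j := by
  unfold pairS
  symm
  apply Finset.sum_subset
  · intro x hx
    simp only [Finset.mem_range] at *
    omega
  · intro x hx hx'
    simp only [Finset.mem_range] at *
    rw [fibPoly_coeff_zero (by omega), mul_zero]

lemma pairS_rec (i j : ℕ) : pairS i (j + 2) = pairS (i + 1) (j + 1) + pairS i j := by
  have hstep : pairS i (j + 2)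
      = ∑ k ∈ Finset.range (j + 3), sgnMoment (i + k) * ((X * fibPoly (j + 1)).coeff k)
        + ∑ k ∈ Finset.range (j + 3), sgnMoment (i + k) * ((fibPoly j).coeff k) := by
    rw [pairS, ← Finset.sum_add_distrib]
    apply Finset.sum_congr rfl
    intro k _
    rw [show fibPoly (j + 2) = X * fibPoly (j + 1) + fibPoly j from by rw [fibPoly]]
    rw [coeff_add, mul_add]
  rw [hstep, pairS_extend i j (j + 3) (by omega)]
  congr 1
  rw [Finset.sum_range_succ']
  have h0 : (X * fibPoly (j + 1)).coeff 0 = 0 := by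
    rw [mul_coeff_zero, coeff_X_zero, zero_mul]
  rw [h0, mul_zero, add_zero]
  apply Finset.sum_congr rfl
  intro k _
  rw [coeff_X_mul]
  ring_nf

lemma pairS_eq_balB : ∀ j i, pairS i j = balB i j
  | 0, i => by
    rw [pairS, balB_zero]
    simp [fibPoly]
  | 1, i => by
    rw [pairS, balB_one]
    simp [fibPoly, Finset.sum_range_succ]
  | (j + 2), i => by
    rw [pairS_rec, pairS_eq_balB (j + 1) (i + 1), pairS_eq_balB j i]
    have hb : balB (i + 1) (j + 1) = balB i (j + 2) - balB i j := by rw [balB]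
    linarith

lemma pairS_lt (i j : ℕ) (h : i < j) : pairS i j = 0 := by
  rw [pairS_eq_balB, balB_lt _ _ h]

lemma pairS_diag (j : ℕ) : pairS j j = (-1 : ℚ) ^ j := by
  rw [pairS_eq_balB, balB_diag]

lemma even_aux : ∀ n : ℕ, Even (n / 2 + ∑ i ∈ Finset.range n, i)
  | 0 => by simp
  | 1 => by simp
  | (n + 2) => by
    have ih := even_aux n
    rw [Finset.sum_range_succ, Finset.sum_range_succ]
    have h : (n + 2) / 2 + (∑ i ∈ Finset.range n, i + n + (n + 1))
        = (n / 2 + ∑ i ∈ Finset.range n, i) + (2 * n + 2) := by omega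
    rw [h]
    exact ih.add (by exact ⟨n + 1, by ring⟩)

/-- Determinantal formula for the Fibonacci polynomials:
`P_n(x) = (-1)^{⌈(n-1)/2⌉} det(...)` where the first `n` rows are the signed
Catalan moments `ν_i, …, ν_{i+n}` and the last row is `1, x, …, xⁿ`.
(Note `⌈(n-1)/2⌉ = ⌊n/2⌋` for `n ≥ 0`.) -/
theorem fibPoly_det_formula (n : ℕ) :
    fibPoly n =
      Polynomial.C ((-1 : ℚ) ^ (n / 2)) *
        Matrix.det (Matrix.of fun i j : Fin (n + 1) =>
          if (i : ℕ) = n then (Polynomial.X : Polynomial ℚ) ^ (j : ℕ)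
          else Polynomial.C (sgnMoment ((i : ℕ) + (j : ℕ)))) := by
  set M : Matrix (Fin (n + 1)) (Fin (n + 1)) (Polynomial ℚ) :=
    Matrix.of fun i j : Fin (n + 1) =>
      if (i : ℕ) = n then (Polynomial.X : Polynomial ℚ) ^ (j : ℕ)
      else Polynomial.C (sgnMoment ((i : ℕ) + (j : ℕ))) with hM
  set T : Matrix (Fin (n + 1)) (Fin (n + 1)) (Polynomial ℚ) :=
    Matrix.of fun k j : Fin (n + 1) => Polynomial.C ((fibPoly (j : ℕ)).coeff (k : ℕ)) with hT
  -- entries of M * T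
  have hMT : ∀ i j : Fin (n + 1), (M * T) i j =
      if (i : ℕ) = n then fibPoly (j : ℕ) else Polynomial.C (pairS (i : ℕ) (j : ℕ)) := by
    intro i j
    rw [Matrix.mul_apply]
    by_cases hi : (i : ℕ) = n
    · rw [if_pos hi]
      have : ∀ k : Fin (n + 1), M i k * T k j
          = Polynomial.C ((fibPoly (j : ℕ)).coeff (k : ℕ)) * X ^ (k : ℕ) := by
        intro k
        rw [hM, hT]
        simp only [Matrix.of_apply, if_pos hi]
        ring
      rw [Finset.sum_congr rfl (fun k _ => this k)]
      rw [Fin.sum_univ_eq_sum_range (fun k => Polynomial.C ((fibPoly (j : ℕ)).coeff k) * X ^ k)]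
      symm
      have hd : (fibPoly (j : ℕ)).natDegree < n + 1 := by
        rw [fibPoly_natDegree]; omega
      calc fibPoly (j : ℕ) = ∑ k ∈ Finset.range (n + 1), Polynomial.monomial k ((fibPoly (j : ℕ)).coeff k) :=
            Polynomial.as_sum_range' _ _ hd
        _ = ∑ k ∈ Finset.range (n + 1), Polynomial.C ((fibPoly (j : ℕ)).coeff k) * X ^ k := by
            apply Finset.sum_congr rfl
            intro k _
            rw [Polynomial.C_mul_X_pow_eq_monomial]
    · rw [if_neg hi]
      have : ∀ k : Fin (n + 1), M i k * T k j
          = Polynomial.C (sgnMoment ((i : ℕ) + (k : ℕ)) * (fibPoly (j : ℕ)).coeff (k : ℕ)) := by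
        intro k
        rw [hM, hT]
        simp only [Matrix.of_apply, if_neg hi]
        rw [← Polynomial.C_mul]
      rw [Finset.sum_congr rfl (fun k _ => this k)]
      rw [Fin.sum_univ_eq_sum_range
        (fun k => Polynomial.C (sgnMoment ((i : ℕ) + k) * (fibPoly (j : ℕ)).coeff k))]
      rw [← map_sum]
      congr 1
      rw [pairS_extend _ _ _ (by omega : (j : ℕ) + 1 ≤ n + 1)]
  -- M * T is lower triangular
  have hMTtri : ((M * T).transpose).BlockTriangular id := by
    intro i j hij
    rw [Matrix.transpose_apply, hMT]
    have hij' : (j : ℕ) < (i : ℕ) := hij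
    rw [if_neg (by omega)]
    rw [pairS_lt _ _ hij', map_zero]
  have hdetMT : (M * T).det = Polynomial.C ((-1 : ℚ) ^ (∑ i ∈ Finset.range n, i)) * fibPoly n := by
    rw [← Matrix.det_transpose, Matrix.det_of_upperTriangular hMTtri]
    have hdiag : ∀ i : Fin (n + 1), ((M * T).transpose) i i =
        if (i : ℕ) = n then fibPoly n else Polynomial.C ((-1 : ℚ) ^ (i : ℕ)) := by
      intro i
      rw [Matrix.transpose_apply, hMT]
      by_cases hi : (i : ℕ) = n
      · rw [if_pos hi, if_pos hi, hi]
      · rw [if_neg hi, if_neg hi, pairS_diag]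
    rw [Finset.prod_congr rfl (fun i _ => hdiag i)]
    rw [Fin.prod_univ_castSucc]
    have hlast : ((Fin.last n : Fin (n + 1)) : ℕ) = n := rfl
    rw [if_pos hlast]
    congr 1
    have : ∀ i : Fin n, (if ((Fin.castSucc i : Fin (n + 1)) : ℕ) = n then fibPoly n
        else Polynomial.C ((-1 : ℚ) ^ ((Fin.castSucc i : Fin (n + 1)) : ℕ)))
        = Polynomial.C ((-1 : ℚ) ^ (i : ℕ)) := by
      intro i
      rw [if_neg (by simp [Fin.castSucc]; omega)]
      congr 1
    rw [Finset.prod_congr rfl (fun i _ => this i)]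
    rw [← map_prod]
    congr 1
    rw [Fin.prod_univ_eq_prod_range (fun i => (-1 : ℚ) ^ i)]
    rw [Finset.prod_pow_eq_pow_sum]
  -- det T = 1
  have hTtri : T.BlockTriangular id := by
    intro i j hij
    rw [hT]
    simp only [Matrix.of_apply]
    rw [fibPoly_coeff_zero (by exact hij), map_zero]
  have hdetT : T.det = 1 := by
    rw [Matrix.det_of_upperTriangular hTtri]
    have : ∀ i : Fin (n + 1), T i i = 1 := by
      intro i
      rw [hT]
      simp only [Matrix.of_apply]
      rw [show (fibPoly (i : ℕ)).coeff (i : ℕ) = 1 from by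
        have := (fibPoly_monic (i : ℕ)).1.coeff_natDegree
        rwa [fibPoly_natDegree] at this, map_one]
    rw [Finset.prod_congr rfl (fun i _ => this i)]
    simp
  have hdetM : M.det = Polynomial.C ((-1 : ℚ) ^ (∑ i ∈ Finset.range n, i)) * fibPoly n := by
    have := hdetMT
    rwa [Matrix.det_mul, hdetT, mul_one] at this
  rw [hdetM, ← mul_assoc, ← map_mul, ← pow_add]
  rw [Even.neg_one_pow (even_aux n), map_one, one_mul]
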